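/- arXiv:1612.02636 — 4 statements merged into one kernel-verified Lean document; each statement's English description precedes it below -/
import Mathlib

section
/- Let m items be partitioned into n nonempty groups, where group x_i has size w_{x_i} (so w_{x_1} + ... + w_{x_n} = m). For a uniformly random permutation of the m items, define the first-occurrence order of the groups as the sequence of groups ordered by the position of the first item of each group in the permutation. Then for every ordering (x_1, x_2, ..., x_n) of the groups, the probability that the first-occurrence order equals (x_1, ..., x_n) is the product over i = 1, ..., n of w_{x_i} / (m - (w_{x_1} + ... + w_{x_{i-1}})). In other words, the first-occurrence order of groups in a uniformly random permutation is a probability-proportional-to-size-without-replacement (ppswor) sample of the groups according to the group sizes. -/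
/-!
Relabel the groups by `π⁻¹`, so that the target order becomes `0, 1, …, n - 1`, and read a
permutation `σ` of the items through the word `v ∘ σ` of group labels. The event depends on `σ`
only through this word, and every word with the same letter counts `c` as `v` is hit by exactly
`∏ x, (c x)!` permutations. It remains to count the words with letter counts `c` whose letters
first occur in increasing order. Splitting off the first letter gives a recursion in which
letters already seen are unconstrained; its solution is
`m! / ∏ (c i)! * ∏ i, c i / (c i + ⋯ + c (n - 1))`, the ppswor formula.
-/

open Finset Function
open scoped Nat

section PermCount

theorem card_fiber_comp_perm {α ι : Type*} [Fintype α] [DecidableEq ι] (v : α → ι)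
    (σ : Equiv.Perm α) (x : ι) : #{a | v (σ a) = x} = #{a | v a = x} :=
  card_equiv σ (by simp)

variable {α ι : Type*} [Fintype α] [DecidableEq α] [Fintype ι] [DecidableEq ι]

theorem card_perm_comp_eq {u v : α → ι} (h : ∀ x, #{a | u a = x} = #{a | v a = x}) :
    #{σ : Equiv.Perm α | v ∘ σ = u} = ∏ x, (#{a | v a = x})! := by
  have hfib (x : ι) : Fintype.card {a // u a = x} = Fintype.card {a // v a = x} := by
    simpa only [Fintype.card_subtype] using h x
  let τ : Equiv.Perm α := Equiv.ofFiberEquiv fun x => Fintype.equivOfCardEq (hfib x)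
  have hτ : v ∘ τ = u := funext (Equiv.ofFiberEquiv_map _)
  -- `σ ↦ σ * τ` maps the stabilizer of `v` onto the permutations sending `v` to `u`
  have hstab (σ : Equiv.Perm α) : v ∘ σ = v ↔ v ∘ ⇑(σ * τ) = u := by
    rw [Equiv.Perm.coe_mul, ← comp_assoc, ← hτ]
    exact τ.surjective.injective_comp_right.eq_iff.symm
  rw [← Fintype.card_subtype, ← Fintype.card_congr ((Equiv.mulRight τ).subtypeEquiv hstab),
    DomMulAct.stabilizer_card]
  simp only [Fintype.card_subtype]

theorem card_perm_comp_mem (v : α → ι) {t : Finset (α → ι)}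
    (ht : ∀ u ∈ t, ∀ x, #{a | u a = x} = #{a | v a = x}) :
    #{σ : Equiv.Perm α | v ∘ σ ∈ t} = #t * ∏ x, (#{a | v a = x})! := by
  have hmaps : Set.MapsTo (fun σ : Equiv.Perm α => v ∘ σ)
      ({σ : Equiv.Perm α | v ∘ σ ∈ t} : Finset _) t :=
    fun _ hσ => (mem_filter.1 hσ).2
  rw [card_eq_sum_card_fiberwise hmaps, ← smul_eq_mul, ← sum_const]
  refine sum_congr rfl fun u hu => ?_
  rw [filter_filter, ← card_perm_comp_eq (ht u hu)]
  exact congrArg card (filter_congr fun σ _ => and_iff_right_of_imp fun h => h ▸ hu)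

end PermCount

section Update

variable {ι : Type*} [Fintype ι] [DecidableEq ι] {c : ι → ℕ} {a : ι}

theorem sum_update_pred_add_one (ha : c a ≠ 0) :
    ∑ i, update c a (c a - 1) i + 1 = ∑ i, c i := by
  rw [sum_update_of_mem (mem_univ a), ← add_sum_erase _ _ (mem_univ a), sdiff_singleton_eq_erase]
  omega

theorem mul_prod_factorial_update_pred (ha : c a ≠ 0) :
    c a * ∏ i, (update c a (c a - 1) i)! = ∏ i, (c i)! := by
  simp_rw [apply_update (fun _ => Nat.factorial) c]
  rw [prod_update_of_mem (mem_univ a), ← mul_assoc, Nat.mul_factorial_pred ha,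
    ← mul_prod_erase _ _ (mem_univ a), sdiff_singleton_eq_erase]

end Update

section Words

variable {m n : ℕ}

/-- The letters `≥ k` of the word `u` occur for the first time in increasing order, provided
they all occur; the letters `< k` count as already seen and are unconstrained. -/
def FirstOccInOrder (k : ℕ) (u : Fin m → Fin n) : Prop :=
  ∀ (p : Fin m) (i : Fin n), k ≤ (i : ℕ) → i < u p → ∃ q < p, u q = i

instance (k : ℕ) : DecidablePred (FirstOccInOrder (m := m) (n := n) k) := fun _ => by
  unfold FirstOccInOrder
  infer_instance

variable (m) in
def orderedWords (k : ℕ) (c : Fin n → ℕ) : Finset (Fin m → Fin n) :=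
  {u | (∀ x, #{p | u p = x} = c x) ∧ FirstOccInOrder k u}

theorem firstOccInOrder_zero_iff {u : Fin m → Fin n} (hu : Surjective u) :
    FirstOccInOrder 0 u ↔ ∀ i j, i < j →
      ({p | u p = i} : Finset (Fin m)).min < ({p | u p = j} : Finset (Fin m)).min := by
  have hne (x : Fin n) : ({p | u p = x} : Finset (Fin m)).Nonempty :=
    let ⟨p, hp⟩ := hu x; ⟨p, by simpa using hp⟩
  constructor
  · intro H i j hij
    set p := ({p | u p = j} : Finset (Fin m)).min' (hne j)
    have hpj : u p = j := by simpa using min'_mem _ (hne j)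
    obtain ⟨q, hqp, hqi⟩ := H p i (Nat.zero_le _) (hpj ▸ hij)
    calc _ ≤ (q : WithTop (Fin m)) := min_le (by simpa using hqi)
      _ < p := WithTop.coe_lt_coe.2 hqp
      _ = _ := coe_min' _
  · intro H p i _ hi
    set q := ({p | u p = i} : Finset (Fin m)).min' (hne i)
    refine ⟨q, WithTop.coe_lt_coe.1 ?_, by simpa using min'_mem _ (hne i)⟩
    calc (q : WithTop (Fin m)) = _ := coe_min' _
      _ < _ := H i (u p) hi
      _ ≤ p := min_le (by simp)

variable {k : ℕ} {a : Fin n} {t : Fin m → Fin n}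

theorem firstOccInOrder_cons_iff :
    FirstOccInOrder k (Fin.cons a t : Fin (m + 1) → Fin n) ↔
      (∀ i : Fin n, k ≤ (i : ℕ) → ¬i < a) ∧
        ∀ (p : Fin m) (i : Fin n), k ≤ (i : ℕ) → i ≠ a → i < t p →
          ∃ q < p, t q = i := by
  unfold FirstOccInOrder
  simp only [Fin.forall_fin_succ, Fin.exists_fin_succ, Fin.cons_zero, Fin.cons_succ,
    Fin.not_lt_zero, Fin.succ_lt_succ_iff, Fin.succ_pos, false_and, exists_false, or_false,
    true_and, imp_false, ne_eq]
  refine and_congr_right fun _ => forall₂_congr fun p i => ?_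
  by_cases hia : a = i <;> simp [hia, eq_comm]

theorem firstOccInOrder_cons_of_lt (h : (a : ℕ) < k) :
    FirstOccInOrder k (Fin.cons a t : Fin (m + 1) → Fin n) ↔ FirstOccInOrder k t := by
  rw [firstOccInOrder_cons_iff, FirstOccInOrder]
  refine ⟨fun H p i hk => H.2 p i hk (by omega), fun H => ⟨fun i hk hi => ?_, ?_⟩⟩
  · have : (i : ℕ) < a := hi
    omega
  · exact fun p i hk _ => H p i hk

theorem firstOccInOrder_cons_self :
    FirstOccInOrder a (Fin.cons a t : Fin (m + 1) → Fin n) ↔ FirstOccInOrder (a + 1) t := by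
  rw [firstOccInOrder_cons_iff, FirstOccInOrder]
  refine (and_iff_right fun i hk hi => hk.not_gt hi).trans (forall₂_congr fun p i => ?_)
  have : a + 1 ≤ (i : ℕ) ↔ a ≤ (i : ℕ) ∧ i ≠ a := by
    rw [ne_eq, Fin.ext_iff]
    omega
  rw [this, and_imp]

theorem not_firstOccInOrder_cons_of_lt (h : k < (a : ℕ)) :
    ¬FirstOccInOrder k (Fin.cons a t : Fin (m + 1) → Fin n) := by
  rw [firstOccInOrder_cons_iff]
  exact fun H => H.1 ⟨k, h.trans a.isLt⟩ le_rfl h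

theorem card_fiber_cons (x : Fin n) :
    #{p | (Fin.cons a t : Fin (m + 1) → Fin n) p = x} =
      #{p | t p = x} + if a = x then 1 else 0 := by
  simp only [card_filter, Fin.sum_univ_succ, Fin.cons_zero, Fin.cons_succ, add_comm]

theorem card_fiber_cons_eq_iff {c : Fin n → ℕ} (ha : c a ≠ 0) :
    (∀ x, #{p | (Fin.cons a t : Fin (m + 1) → Fin n) p = x} = c x) ↔
      ∀ x, #{p | t p = x} = update c a (c a - 1) x := by
  refine forall_congr' fun x => ?_
  rw [card_fiber_cons]
  rcases eq_or_ne a x with rfl | hx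
  · simp only [if_true, update_self]
    omega
  · simp [hx, hx.symm]

theorem card_filter_head_orderedWords {k' : ℕ} {c : Fin n → ℕ} (ha : c a ≠ 0)
    (hk : ∀ t : Fin m → Fin n, FirstOccInOrder k (Fin.cons a t : Fin (m + 1) → Fin n) ↔
      FirstOccInOrder k' t) :
    #{u ∈ orderedWords (m + 1) k c | u 0 = a} = #(orderedWords m k' (update c a (c a - 1))) := by
  rw [← card_image_of_injective (orderedWords m k' _)
    (Fin.cons_right_injective (α := fun _ => Fin n) a)]
  refine congrArg card (ext fun u => ?_)
  simp only [orderedWords, mem_filter, mem_univ, true_and, mem_image]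
  constructor
  · rintro ⟨hu, rfl⟩
    rw [← Fin.cons_self_tail u, card_fiber_cons_eq_iff ha, hk] at hu
    exact ⟨Fin.tail u, hu, Fin.cons_self_tail u⟩
  · rintro ⟨t, ht, rfl⟩
    rw [card_fiber_cons_eq_iff ha, hk]
    exact ⟨ht, rfl⟩

theorem filter_head_orderedWords_eq_empty {c : Fin n → ℕ} (h : c a = 0 ∨ k < (a : ℕ)) :
    {u ∈ orderedWords (m + 1) k c | u 0 = a} = ∅ := by
  refine filter_eq_empty_iff.2 fun u hu hua => ?_
  rw [orderedWords, mem_filter, ← Fin.cons_self_tail u, hua] at hu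
  rcases h with h | h
  · have := hu.2.1 a
    rw [card_fiber_cons, h] at this
    simp at this
  · exact not_firstOccInOrder_cons_of_lt h hu.2.2

end Words

section Ppswor

variable {n : ℕ}

def tailWeight (c : Fin n → ℕ) (k : ℕ) : ℕ := ∑ j with k ≤ (j : Fin n), c j

/-- The probability that ppswor sampling by the weights `c` among the groups `≥ k` draws them
in the order `k, k + 1, …, n - 1`. -/
noncomputable def ppsworProb (c : Fin n → ℕ) (k : ℕ) : ℝ :=
  ∏ i with k ≤ (i : Fin n), (c i : ℝ) / tailWeight c i

theorem ppsworProb_congr {c c' : Fin n → ℕ} {k : ℕ}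
    (h : ∀ i : Fin n, k ≤ (i : ℕ) → c i = c' i) : ppsworProb c k = ppsworProb c' k := by
  refine prod_congr rfl fun i hi => ?_
  have hi : k ≤ (i : ℕ) := (mem_filter.1 hi).2
  have hw : tailWeight c i = tailWeight c' i :=
    sum_congr rfl fun j hj => h j (hi.trans (mem_filter.1 hj).2)
  rw [h i hi, hw]

theorem tailWeight_mul_ppsworProb {c : Fin n → ℕ} {a : Fin n} (ha : c a ≠ 0) :
    (tailWeight c a : ℝ) * ppsworProb c a = c a * ppsworProb c (a + 1) := by
  have hsplit : ({i | (a : ℕ) ≤ i} : Finset (Fin n)) =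
      insert a ({i | (a : ℕ) + 1 ≤ i} : Finset (Fin n)) := by
    ext i
    simp only [mem_filter, mem_univ, true_and, mem_insert, Fin.ext_iff]
    omega
  have hle : (c a : ℝ) ≤ tailWeight c a := by
    exact_mod_cast single_le_sum (fun _ _ => Nat.zero_le _) (mem_filter.2 ⟨mem_univ a, le_rfl⟩)
  have hne : (tailWeight c a : ℝ) ≠ 0 := by
    have : (0 : ℝ) < c a := by exact_mod_cast Nat.pos_of_ne_zero ha
    linarith
  rw [ppsworProb, hsplit, prod_insert (by simp), ← ppsworProb, ← mul_assoc,
    mul_div_cancel₀ _ hne]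

theorem sum_lt_add_tailWeight (c : Fin n → ℕ) (k : ℕ) :
    ∑ j with (j : Fin n) < k, c j + tailWeight c k = ∑ j, c j := by
  rw [tailWeight, ← sum_filter_add_sum_filter_not univ fun j : Fin n => (j : ℕ) < k]
  simp only [not_lt]

theorem sum_ite_lt_tailWeight (c : Fin n → ℕ) (k : ℕ) :
    ∑ j : Fin n, (if (j : ℕ) < k then c j else if (j : ℕ) = k then tailWeight c k else 0) =
      ∑ j, c j := by
  rw [← sum_lt_add_tailWeight c k, sum_ite, add_right_inj]
  rcases lt_or_ge k n with hk | hk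
  · rw [sum_eq_single_of_mem ⟨k, hk⟩ (by simp) fun j _ hj => if_neg fun h => hj (Fin.ext h),
      if_pos rfl]
  · have hlt (j : Fin n) : (j : ℕ) < k := j.isLt.trans_le hk
    simp [tailWeight, hlt, fun j => (hlt j).not_ge]

theorem card_filter_head_orderedWords_mul {m k k' : ℕ} {c : Fin n → ℕ} {a : Fin n}
    (ha : c a ≠ 0) (hak' : (a : ℕ) < k')
    (hk : ∀ t : Fin m → Fin n, FirstOccInOrder k (Fin.cons a t : Fin (m + 1) → Fin n) ↔
      FirstOccInOrder k' t)
    (ih : (#(orderedWords m k' (update c a (c a - 1))) : ℝ) *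
        ∏ i, ((update c a (c a - 1) i)! : ℝ) = m ! * ppsworProb (update c a (c a - 1)) k') :
    (#{u ∈ orderedWords (m + 1) k c | u 0 = a} : ℝ) * ∏ i, ((c i)! : ℝ) =
      m ! * (c a * ppsworProb c k') := by
  have hfac : ∏ i, ((c i)! : ℝ) = c a * ∏ i, ((update c a (c a - 1) i)! : ℝ) := by
    exact_mod_cast (mul_prod_factorial_update_pred ha).symm
  have hprob : ppsworProb (update c a (c a - 1)) k' = ppsworProb c k' :=
    ppsworProb_congr fun i hi => update_of_ne (fun h => by subst h; omega) _ _
  rw [card_filter_head_orderedWords ha hk, hfac, mul_left_comm, ih, hprob, mul_left_comm]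

theorem card_orderedWords_mul_prod_factorial {m k : ℕ} {c : Fin n → ℕ}
    (hc : ∀ i : Fin n, k ≤ (i : ℕ) → c i ≠ 0) (hm : ∑ i, c i = m) :
    (#(orderedWords m k c) : ℝ) * ∏ i, ((c i)! : ℝ) = m ! * ppsworProb c k := by
  induction m generalizing k c with
  | zero =>
    have hc0 (i : Fin n) : c i = 0 := sum_eq_zero_iff.1 hm i (mem_univ i)
    have hwords : orderedWords 0 k c = univ := eq_univ_of_forall fun u =>
      mem_filter.2 ⟨mem_univ u, fun x => by simp [hc0], fun p => p.elim0⟩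
    have hprob : ppsworProb c k = 1 :=
      prod_eq_one fun i hi => absurd (hc0 i) (hc i (mem_filter.1 hi).2)
    simp [hwords, hprob, hc0]
  | succ m ih =>
    -- for `j = k` the factor `c k * ppsworProb c (k + 1)` is traded for
    -- `tailWeight c k * ppsworProb c k`, so that the brackets sum to `m + 1`
    have hterm (j : Fin n) :
        (#{u ∈ orderedWords (m + 1) k c | u 0 = j} : ℝ) * ∏ i, ((c i)! : ℝ) =
          m ! * (((if (j : ℕ) < k then c j else if (j : ℕ) = k then tailWeight c k else 0 : ℕ)
            : ℝ) * ppsworProb c k) := by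
      have ih' {k' : ℕ} (hj : c j ≠ 0) (hjk' : (j : ℕ) < k')
          (hk' : ∀ i : Fin n, k' ≤ (i : ℕ) → c i ≠ 0) :=
        ih (k := k') (c := update c j (c j - 1))
          (fun i hi => by rw [update_of_ne (fun h => by subst h; omega)]; exact hk' i hi)
          (Nat.add_right_cancel ((sum_update_pred_add_one hj).trans hm))
      rcases lt_trichotomy (j : ℕ) k with hjk | rfl | hjk
      · rw [if_pos hjk]
        rcases eq_or_ne (c j) 0 with hj | hj
        · simp [filter_head_orderedWords_eq_empty (.inl hj), hj]
        · exact card_filter_head_orderedWords_mul hj hjk (fun _ => firstOccInOrder_cons_of_lt hjk)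
            (ih' hj hjk hc)
      · have hj := hc j le_rfl
        rw [if_neg (lt_irrefl _), if_pos rfl, tailWeight_mul_ppsworProb hj]
        exact card_filter_head_orderedWords_mul hj (Nat.lt_succ_self _)
          (fun _ => firstOccInOrder_cons_self)
          (ih' hj (Nat.lt_succ_self _) fun i hi => hc i (Nat.le_of_succ_le hi))
      · simp [filter_head_orderedWords_eq_empty (.inr hjk), hjk.not_gt, hjk.ne']
    rw [card_eq_sum_card_fiberwise (f := fun u => u 0) (t := univ) fun _ _ => mem_univ _,
      Nat.cast_sum, sum_mul, sum_congr rfl fun j _ => hterm j, ← mul_sum, ← sum_mul,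
      ← Nat.cast_sum, sum_ite_lt_tailWeight, hm, Nat.factorial_succ]
    push_cast
    ring

theorem ppsworProb_zero (c : Fin n → ℕ) :
    ppsworProb c 0 =
      ∏ i, (c i : ℝ) / (∑ j, (c j : ℝ) - ∑ j ∈ univ.filter (· < i), (c j : ℝ)) := by
  rw [ppsworProb, filter_true_of_mem fun i _ => Nat.zero_le _]
  refine prod_congr rfl fun i _ => ?_
  rw [← Nat.cast_sum, ← sum_lt_add_tailWeight c i, Nat.cast_add, Nat.cast_sum]
  simp only [Fin.lt_def, add_sub_cancel_left]

end Ppswor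

/-- **ppswor from a uniformly random permutation.**
`m` items (`Fin m`) are partitioned into `n` nonempty groups by `g : Fin m → Fin n`
(nonemptyness = surjectivity of `g`), and `w x` is the size of group `x`.
A permutation `σ` of the items is drawn uniformly at random (i.e., we count the
permutations with the desired property and divide by `m!`).  The first-occurrence
order of the groups is the sequence of groups ordered by the position of the first
item of each group; it equals the ordering `(π 0, π 1, …, π (n-1))` iff for all
`i < j` the first position holding an item of group `π i` precedes the first
position holding an item of group `π j`.  The probability of this event is
`∏ i, w (π i) / (m - ∑_{j < i} w (π j))`, i.e., the first-occurrence order is a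
ppswor sample of the groups according to the group sizes. -/
theorem stmt_0 (m n : ℕ) (g : Fin m → Fin n) (hg : Function.Surjective g)
    (w : Fin n → ℕ) (hw : ∀ x, w x = (Finset.univ.filter fun p => g p = x).card)
    (π : Equiv.Perm (Fin n)) :
    (Nat.card {σ : Equiv.Perm (Fin m) //
        ∀ i j : Fin n, i < j →
          (Finset.univ.filter fun p => g (σ p) = π i).min <
            (Finset.univ.filter fun p => g (σ p) = π j).min} : ℝ) /
        (Nat.factorial m : ℝ) =
      ∏ i : Fin n,
        (w (π i) : ℝ) /
          ((m : ℝ) - ∑ j ∈ Finset.univ.filter (· < i), (w (π j) : ℝ)) := by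
  set v : Fin m → Fin n := π.symm ∘ g
  set c : Fin n → ℕ := fun x => #{p | v p = x}
  have hv : Surjective v := π.symm.surjective.comp hg
  have hfiber (f : Fin m → Fin m) (x : Fin n) :
      univ.filter (fun p => g (f p) = π x) = univ.filter fun p => v (f p) = x :=
    filter_congr fun p _ => (Equiv.symm_apply_eq π).symm
  have hc (x : Fin n) : w (π x) = c x := (hw (π x)).trans (congrArg card (hfiber id x))
  have hc_pos (x : Fin n) : c x ≠ 0 :=
    let ⟨p, hp⟩ := hv x; card_ne_zero_of_mem (mem_filter.2 ⟨mem_univ p, hp⟩)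
  have hc_sum : ∑ x, c x = m := by
    rw [← card_eq_sum_card_fiberwise fun _ _ => mem_univ _, card_univ, Fintype.card_fin]
  have hevent (σ : Equiv.Perm (Fin m)) :
      (∀ i j : Fin n, i < j → (univ.filter fun p => g (σ p) = π i).min <
        (univ.filter fun p => g (σ p) = π j).min) ↔ v ∘ σ ∈ orderedWords m 0 c := by
    simp_rw [hfiber]
    have hmin := firstOccInOrder_zero_iff (hv.comp σ.surjective)
    rw [orderedWords, mem_filter]
    exact ⟨fun h => ⟨mem_univ _, card_fiber_comp_perm v σ, hmin.2 h⟩,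
      fun h => hmin.1 h.2.2⟩
  rw [Nat.card_eq_fintype_card, Fintype.card_subtype, filter_congr fun σ _ => hevent σ,
    card_perm_comp_mem v fun u hu => (mem_filter.1 hu).2.1]
  change ((#(orderedWords m 0 c) * ∏ x, (c x)! : ℕ) : ℝ) / m ! = _
  push_cast
  rw [card_orderedWords_mul_prod_factorial (fun i _ => hc_pos i) hc_sum,
    mul_div_cancel_left₀ _ (by positivity), ppsworProb_zero]
  simp only [hc, ← hc_sum, Nat.cast_sum]
end

section
/- Let m items be partitioned into n nonempty groups, where group x has size w_x and m is the total number of items, and assign to each item an independent Uniform[0,1] random value; define the seed of each group as the minimum of its items' values. Fix a group x and an integer k with 1 ≤ k ≤ n. Then the probability that the seed of group x is among the k smallest group seeds is at least 1 - (1 - w_x/m)^k. That is, in a fixed-size ppswor sample of k keys taken according to weights w_x, a key with weight w_x is selected with probability at least 1 - (1 - w_x/m)^k. -/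
/-!
If at least `k` groups have a seed below that of `x`, then the `k` smallest item values all sit
on items outside group `x`. The values are i.i.d. and atomless, so ties have probability zero and,
by exchangeability, every `k`-set of items is equally likely to carry the `k` smallest values.
Hence this happens with probability at most `C(m - w_x, k) / C(m, k) ≤ (1 - w_x / m) ^ k`.
-/

open MeasureTheory ProbabilityTheory Set Finset

/-- The seed of group `x`: the minimum (in `WithTop ℝ`) of the values of the items
in group `x`. -/
noncomputable def groupSeed {Ω : Type*} {m n : ℕ} (g : Fin m → Fin n)
    (U : Fin m → Ω → ℝ) (x : Fin n) (ω : Ω) : WithTop ℝ :=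
  (Finset.univ.filter fun p => g p = x).inf fun p => ((U p ω : ℝ) : WithTop ℝ)

open scoped ENNReal Pointwise

theorem Nat.descFactorial_mul_pow_le_descFactorial_mul_pow {N m : ℕ} (h : N ≤ m) (k : ℕ) :
    N.descFactorial k * m ^ k ≤ m.descFactorial k * N ^ k := by
  simp only [Nat.descFactorial_eq_prod_range, Finset.pow_eq_prod_const, ← Finset.prod_mul_distrib]
  refine Finset.prod_le_prod' fun i _ => ?_
  rw [Nat.sub_mul, Nat.sub_mul, Nat.mul_comm N m]
  exact Nat.sub_le_sub_left (Nat.mul_le_mul_left i h) _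

theorem Nat.choose_div_choose_le_div_pow {N m k : ℕ} (hN : N ≤ m) (hk : k ≤ m) :
    (N.choose k : ℝ) / m.choose k ≤ ((N : ℝ) / m) ^ k := by
  obtain rfl | hm := Nat.eq_zero_or_pos m
  · obtain rfl := Nat.le_zero.1 hk
    simp
  have hchoose : N.choose k * m ^ k ≤ N ^ k * m.choose k := by
    refine Nat.le_of_mul_le_mul_left ?_ k.factorial_pos
    calc k.factorial * (N.choose k * m ^ k) = N.descFactorial k * m ^ k := by
          rw [Nat.descFactorial_eq_factorial_mul_choose, mul_assoc]
      _ ≤ m.descFactorial k * N ^ k := Nat.descFactorial_mul_pow_le_descFactorial_mul_pow hN k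
      _ = k.factorial * (N ^ k * m.choose k) := by
          rw [Nat.descFactorial_eq_factorial_mul_choose]; ring
  rw [div_pow, div_le_div_iff₀ (by exact_mod_cast Nat.choose_pos hk) (by positivity)]
  exact_mod_cast hchoose

section LowestCoords

variable {ι α : Type*}

def lowestCoords [LinearOrder α] (S : Finset ι) : Set (ι → α) :=
  {u | ∀ p ∈ S, ∀ q ∉ S, u p ≤ u q}

theorem exists_card_eq_mem_lowestCoords [Fintype ι] [AddCommMonoid α] [LinearOrder α]
    [IsOrderedCancelAddMonoid α] (u : ι → α) {k : ℕ} (hk : k ≤ Fintype.card ι) :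
    ∃ S : Finset ι, S.card = k ∧ u ∈ lowestCoords S := by
  classical
  -- a `k`-set of minimal total value: exchanging one of its points for a smaller outside one
  -- would decrease the total
  obtain ⟨S, hS, hmin⟩ := (univ.powersetCard k).exists_min_image (fun S => ∑ p ∈ S, u p)
    (powersetCard_nonempty.2 (by simpa using hk))
  rw [mem_powersetCard] at hS
  refine ⟨S, hS.2, fun p hp q hq => le_of_not_gt fun hqp => ?_⟩
  have hq' : q ∉ S.erase p := fun h => hq (mem_of_mem_erase h)
  have hswap : insert q (S.erase p) ∈ univ.powersetCard k := by
    rw [mem_powersetCard, card_insert_of_notMem hq', card_erase_of_mem hp, hS.2]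
    exact ⟨subset_univ _, Nat.sub_add_cancel (hS.2 ▸ card_pos.2 ⟨p, hp⟩)⟩
  have hle := hmin _ hswap
  rw [sum_insert hq', ← add_sum_erase S u hp] at hle
  exact lt_irrefl _ ((add_lt_add_left hqp _).trans_le hle)

theorem card_filter_lt_lt_card_of_mem_lowestCoords [Fintype ι] [DecidableEq ι] [LinearOrder α]
    {S : Finset ι} {u : ι → α} (hu : u ∈ lowestCoords S) {q : ι} (hq : q ∈ S) :
    #{p | u p < u q} < S.card := by
  refine (card_le_card fun p hp => ?_).trans_lt (card_erase_lt_of_mem hq)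
  rw [mem_filter] at hp
  refine mem_erase.2 ⟨fun h => hp.2.ne (congrArg u h), by_contra fun hpS => ?_⟩
  exact (hu q hq p hpS).not_gt hp.2

variable [Fintype ι] {ρ : Measure ℝ}

theorem measurableSet_lowestCoords (S : Finset ι) :
    MeasurableSet (lowestCoords (α := ℝ) S) := by
  simp only [lowestCoords, Set.ofPred_forall]
  exact .iInter fun p => .iInter fun _ => .iInter fun q => .iInter fun _ =>
    measurableSet_le (measurable_pi_apply p) (measurable_pi_apply q)

theorem MeasureTheory.Measure.pi_setOf_apply_eq_apply_eq_zero [IsProbabilityMeasure ρ]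
    [NullSingletonClass ρ] {p q : ι} (hpq : p ≠ q) :
    Measure.pi (fun _ : ι => ρ) {u | u p = u q} = 0 := by
  have hind : IndepFun (fun u : ι → ℝ => u p) (fun u => u q) (Measure.pi fun _ => ρ) :=
    (iIndepFun_pi (X := fun _ => id) fun _ => aemeasurable_id).indepFun hpq
  have hlaw : (Measure.pi fun _ : ι => ρ).map (fun u => (u p, u q)) = ρ.prod ρ := by
    rw [(indepFun_iff_map_prod_eq_prod_map_map (measurable_pi_apply p).aemeasurable
      (measurable_pi_apply q).aemeasurable).1 hind, (measurePreserving_eval _ p).map_eq,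
      (measurePreserving_eval _ q).map_eq]
  have hdiag : (ρ.prod ρ) (Set.diagonal ℝ) = 0 := by
    rw [Measure.measure_prod_null measurableSet_diagonal]
    exact Filter.Eventually.of_forall fun x => by simp [Set.preimage, Set.diagonal]
  rw [← hdiag, ← hlaw, Measure.map_apply
    ((measurable_pi_apply p).prodMk (measurable_pi_apply q)) measurableSet_diagonal]
  rfl

theorem aedisjoint_lowestCoords [IsProbabilityMeasure ρ] [NullSingletonClass ρ] {S T : Finset ι}
    (hcard : S.card = T.card) (hST : S ≠ T) :
    AEDisjoint (Measure.pi fun _ : ι => ρ) (lowestCoords S) (lowestCoords T) := by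
  obtain ⟨p, hpS, hpT⟩ := Finset.not_subset.1 fun h => hST (eq_of_subset_of_card_le h hcard.ge)
  obtain ⟨q, hqT, hqS⟩ :=
    Finset.not_subset.1 fun h => hST (eq_of_subset_of_card_le h hcard.le).symm
  refine measure_mono_null (fun u hu => ?_)
    (Measure.pi_setOf_apply_eq_apply_eq_zero (ρ := ρ) (p := p) (q := q)
      fun h => hpT (h ▸ hqT))
  exact le_antisymm (hu.1 p hpS q hqS) (hu.2 q hqT p hpT)

theorem MeasureTheory.Measure.pi_lowestCoords_perm_smul [SigmaFinite ρ] [DecidableEq ι]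
    (σ : Equiv.Perm ι) (S : Finset ι) :
    Measure.pi (fun _ : ι => ρ) (lowestCoords (σ • S)) =
      Measure.pi (fun _ => ρ) (lowestCoords S) := by
  rw [← (measurePreserving_piCongrLeft (fun _ : ι => ρ) σ).measure_preimage
    (measurableSet_lowestCoords _).nullMeasurableSet]
  congr 1
  ext v
  simp only [lowestCoords, Set.mem_preimage, Set.mem_ofPred_eq]
  rw [← σ.forall_congr_right]
  refine forall_congr' fun p => ?_
  rw [← σ.forall_congr_right]
  simp only [← Equiv.Perm.smul_def, Finset.smul_mem_smul_finset_iff]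
  simp [Equiv.Perm.smul_def, MeasurableEquiv.coe_piCongrLeft, Equiv.piCongrLeft_apply_apply]

theorem MeasureTheory.Measure.pi_lowestCoords_le_inv_choose [IsProbabilityMeasure ρ]
    [NullSingletonClass ρ] (S : Finset ι) :
    Measure.pi (fun _ : ι => ρ) (lowestCoords S) ≤
      ((Fintype.card ι).choose S.card : ℝ≥0∞)⁻¹ := by
  classical
  have hsymm : ∀ T ∈ univ.powersetCard S.card, Measure.pi (fun _ : ι => ρ) (lowestCoords T) =
      Measure.pi (fun _ => ρ) (lowestCoords S) := by
    intro T hT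
    obtain ⟨σ, hσ⟩ := (Set.powersetCard.isPretransitive (α := ι) (n := S.card)).exists_smul_eq
      ⟨S, rfl⟩ ⟨T, (mem_powersetCard.1 hT).2⟩
    rw [← show σ • S = T from congrArg Subtype.val hσ, pi_lowestCoords_perm_smul]
  have hdisj : ((univ.powersetCard S.card : Finset (Finset ι)) : Set (Finset ι)).Pairwise
      (Function.onFun (AEDisjoint (Measure.pi fun _ : ι => ρ)) lowestCoords) :=
    fun T hT T' hT' hne => aedisjoint_lowestCoords
      (by rw [mem_coe, mem_powersetCard] at hT hT'; exact hT.2.trans hT'.2.symm) hne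
  have hsum := measure_biUnion_finset₀ hdisj
    fun T _ => (measurableSet_lowestCoords T).nullMeasurableSet
  rw [Finset.sum_congr rfl hsymm, sum_const, card_powersetCard, card_univ, nsmul_eq_mul] at hsum
  rw [ENNReal.le_inv_iff_mul_le, mul_comm, ← hsum]
  exact prob_le_one

theorem MeasureTheory.Measure.pi_biUnion_lowestCoords_le [IsProbabilityMeasure ρ]
    [NullSingletonClass ρ] (A : Finset ι) {k : ℕ} (hk : k ≤ Fintype.card ι) :
    Measure.pi (fun _ : ι => ρ) (⋃ S ∈ A.powersetCard k, lowestCoords S) ≤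
      ENNReal.ofReal (((A.card : ℝ) / Fintype.card ι) ^ k) := by
  calc Measure.pi (fun _ : ι => ρ) (⋃ S ∈ A.powersetCard k, lowestCoords S)
      ≤ ∑ S ∈ A.powersetCard k, ((Fintype.card ι).choose k : ℝ≥0∞)⁻¹ := by
        refine (measure_biUnion_finset_le _ _).trans (sum_le_sum fun S hS => ?_)
        rw [← (mem_powersetCard.1 hS).2]
        exact pi_lowestCoords_le_inv_choose S
    _ = ENNReal.ofReal ((A.card.choose k : ℝ) / (Fintype.card ι).choose k) := by
        rw [sum_const, card_powersetCard, nsmul_eq_mul, ENNReal.ofReal_div_of_pos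
          (by exact_mod_cast Nat.choose_pos hk), ENNReal.ofReal_natCast, ENNReal.ofReal_natCast,
          div_eq_mul_inv]
    _ ≤ _ := ENNReal.ofReal_le_ofReal
        (Nat.choose_div_choose_le_div_pow (card_le_univ A) hk)

end LowestCoords

theorem MeasureTheory.ofReal_one_sub_le_measure_of_measure_compl_le {Ω : Type*}
    [MeasurableSpace Ω] {μ : Measure Ω} [IsProbabilityMeasure μ] {s : Set Ω} {q : ℝ}
    (hq : 0 ≤ q) (h : μ sᶜ ≤ ENNReal.ofReal q) : ENNReal.ofReal (1 - q) ≤ μ s :=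
  calc ENNReal.ofReal (1 - q) = 1 - ENNReal.ofReal q := by
        rw [ENNReal.ofReal_sub _ hq, ENNReal.ofReal_one]
    _ ≤ 1 - μ sᶜ := tsub_le_tsub_left h 1
    _ ≤ μ s := tsub_le_iff_right.2 (measure_univ (μ := μ) ▸ measure_univ_le_add_compl s)

section GroupSeed

variable {Ω : Type*} {m n : ℕ} (g : Fin m → Fin n) (U : Fin m → Ω → ℝ) (ω : Ω)

open scoped Classical in
theorem card_groupSeed_lt_le (q : Fin m) :
    #{y | groupSeed g U y ω < groupSeed g U (g q) ω} ≤ #{p | U p ω < U q ω} := by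
  refine (card_le_card fun y hy => ?_).trans (card_image_le (f := g))
  have hlt : groupSeed g U y ω < U q ω :=
    (mem_filter.1 hy).2.trans_le (Finset.inf_le (by simp))
  obtain ⟨p, hp, hpq⟩ := Finset.inf_lt_iff.1 hlt
  exact mem_image.2 ⟨p, by simpa using hpq, by simpa using hp⟩

open scoped Classical in
theorem exists_lowestCoords_of_le_card_groupSeed_lt {x : Fin n} {k : ℕ} (hkm : k ≤ m)
    (h : k ≤ #{y | groupSeed g U y ω < groupSeed g U x ω}) :
    ∃ S ∈ powersetCard k {p | g p ≠ x}, (fun p => U p ω) ∈ lowestCoords S := by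
  obtain ⟨S, hS, hlow⟩ := exists_card_eq_mem_lowestCoords (fun p => U p ω) (k := k) (by simpa)
  refine ⟨S, mem_powersetCard.2 ⟨fun q hq => mem_filter.2 ⟨mem_univ q, fun hqx => ?_⟩, hS⟩,
    hlow⟩
  subst hqx
  exact (h.trans (card_groupSeed_lt_le g U ω q)).not_gt
    (hS ▸ card_filter_lt_lt_card_of_mem_lowestCoords hlow hq)

end GroupSeed

open scoped Classical in
theorem measure_le_card_groupSeed_lt_le {Ω : Type*} [MeasurableSpace Ω] {μ : Measure Ω}
    {ρ : Measure ℝ} [IsProbabilityMeasure ρ] [NullSingletonClass ρ] {m n : ℕ} (g : Fin m → Fin n)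
    {U : Fin m → Ω → ℝ} (hU : ∀ p, Measurable (U p))
    (hlaw : μ.map (fun ω p => U p ω) = Measure.pi fun _ => ρ)
    (x : Fin n) {k : ℕ} (hm : 0 < m) (hkm : k ≤ m) :
    μ {ω | k ≤ #{y | groupSeed g U y ω < groupSeed g U x ω}} ≤
      ENNReal.ofReal ((1 - (#{p | g p = x} : ℝ) / m) ^ k) := by
  have hout : ((#{p | g p ≠ x} : ℕ) : ℝ) / m = 1 - (#{p | g p = x} : ℝ) / m := by
    have hcard : #{p | g p = x} + #{p | g p ≠ x} = m := by
      simpa using card_filter_add_card_filter_not (s := univ) fun p => g p = x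
    rw [eq_sub_iff_add_eq, ← add_div, div_eq_one_iff_eq (Nat.cast_pos.2 hm).ne']
    exact_mod_cast (add_comm _ _).trans hcard
  calc μ {ω | k ≤ #{y | groupSeed g U y ω < groupSeed g U x ω}}
      ≤ μ ((fun ω p => U p ω) ⁻¹' ⋃ S ∈ powersetCard k {p | g p ≠ x}, lowestCoords S) :=
        measure_mono fun ω hω => by
          simpa using exists_lowestCoords_of_le_card_groupSeed_lt g U ω hkm hω
    _ = Measure.pi (fun _ => ρ) (⋃ S ∈ powersetCard k {p | g p ≠ x}, lowestCoords S) := by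
        rw [← hlaw, Measure.map_apply (measurable_pi_lambda _ hU)
          (Finset.measurableSet_biUnion _ fun S _ => measurableSet_lowestCoords S)]
    _ ≤ _ := Measure.pi_biUnion_lowestCoords_le _ (by simpa using hkm)
    _ = _ := by rw [Fintype.card_fin, hout]

open scoped Classical in
/-- **inclusion probability in a fixed-size ppswor sample.**
`m` items are partitioned into `n` nonempty groups by `g` (surjectivity), group `x`
having size `w x`; each item gets an independent Uniform[0,1] value, and the seed of
a group is the minimum value over its items.  For a fixed group `x` and `1 ≤ k ≤ n`,
the probability that the seed of `x` is among the `k` smallest group seeds (i.e.,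
fewer than `k` groups have a strictly smaller seed) is at least
`1 - (1 - w x / m)^k`. -/
theorem stmt_3 {Ω : Type*} [MeasurableSpace Ω] (μ : Measure Ω) [IsProbabilityMeasure μ]
    (m n : ℕ) (g : Fin m → Fin n) (hg : Function.Surjective g)
    (w : Fin n → ℕ) (hw : ∀ x, w x = (Finset.univ.filter fun p => g p = x).card)
    (U : Fin m → Ω → ℝ) (hmeas : ∀ p, Measurable (U p))
    (hunif : ∀ p, Measure.map (U p) μ = (volume : Measure ℝ).restrict (Icc 0 1))
    (hindep : iIndepFun U μ)
    (x : Fin n) (k : ℕ) (hk1 : 1 ≤ k) (hkn : k ≤ n) :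
    ENNReal.ofReal (1 - (1 - (w x : ℝ) / (m : ℝ)) ^ k) ≤
      μ {ω | (Finset.univ.filter fun y : Fin n =>
          groupSeed g U y ω < groupSeed g U x ω).card < k} := by
  set ρ : Measure ℝ := volume.restrict (Icc 0 1)
  have : IsProbabilityMeasure ρ := ⟨by simp [ρ]⟩
  have hkm : k ≤ m := hkn.trans (by simpa using Fintype.card_le_of_surjective g hg)
  have hwm : (w x : ℝ) ≤ m := by
    exact_mod_cast hw x ▸ (card_filter_le _ _).trans_eq (card_fin m)
  have hlaw : μ.map (fun ω p => U p ω) = Measure.pi fun _ => ρ := by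
    rw [hindep.map_fun_eq_pi_map fun p => (hmeas p).aemeasurable]
    simp only [hunif, ρ]
  refine ofReal_one_sub_le_measure_of_measure_compl_le
    (pow_nonneg (sub_nonneg.2 (div_le_one_of_le₀ hwm m.cast_nonneg)) k) ?_
  simpa only [compl_ofPred, not_lt, hw x] using
    measure_le_card_groupSeed_lt_le g hmeas hlaw x (hk1.trans hkm) hkm
end

section
/- Consider a sequence of h independent Bernoulli(τ) trials with 0 < τ ≤ 1 and h ≥ 1, and let c denote the number of trials from the first success to the end of the sequence (inclusive), with c = 0 if there is no success. Define the estimator ĥ = 0 if c = 0 and ĥ = c - 1 + 1/τ if c ≥ 1. Then E[ĥ] = h; that is, the Sample-and-Hold estimator ĥ_x = c_x - 1 + 1/τ (set to 0 for uncached keys) is an unbiased estimator of the weight h_x of a key. -/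
open MeasureTheory ProbabilityTheory Set Finset

/-!
Write `q = 1 - τ` and `c` for the counter. The counter stays `≤ k` exactly when the first
`h - k` trials all fail, so by independence `P(c > k) = 1 - q ^ (h - k)`, and the tail-sum
formula gives `E[c] = ∑_{k<h} (1 - q ^ (h - k)) = h - q (1 - q ^ h) / τ`. The estimator is
`c + (1/τ - 1) · 1[c > 0]`, and the correction `(q/τ) · P(c > 0) = q (1 - q ^ h) / τ` cancels
the deficit exactly.
-/

/-- The Sample-and-Hold counter of a key with `h` occurrences, given the Bernoulli
coin flips `X 0, …, X (h-1)` of the occurrences: the number of trials from the first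
success to the end of the sequence (inclusive), i.e. `h - i` where `i` is the index
of the first success, and `0` if there is no success. -/
def shCounter {Ω : Type*} {h : ℕ} (X : Fin h → Ω → Bool) (ω : Ω) : ℕ :=
  Finset.univ.sup fun i : Fin h => if X i ω = true then h - (i : ℕ) else 0

section Counter

variable {Ω : Type*} {h : ℕ} (X : Fin h → Ω → Bool)

lemma shCounter_le (ω : Ω) : shCounter X ω ≤ h :=
  Finset.sup_le fun i _ => by split <;> omega

lemma shCounter_le_iff (k : ℕ) (ω : Ω) :
    shCounter X ω ≤ k ↔ ∀ i : Fin h, (i : ℕ) + k < h → X i ω = false := by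
  simp only [shCounter, Finset.sup_le_iff, Finset.mem_univ, true_implies]
  refine forall_congr' fun i => ?_
  cases X i ω
  · simp
  · simp only [↓reduceIte, Bool.true_eq_false, imp_false, not_lt]
    omega

lemma measurable_shCounter [MeasurableSpace Ω] (hmeas : ∀ i, Measurable (X i)) :
    Measurable (shCounter X) :=
  (measurable_of_finite (shCounter fun i (b : Fin h → Bool) => b i)).comp
    (measurable_pi_lambda _ hmeas)

end Counter

lemma card_filter_add_lt (h k : ℕ) : #{i : Fin h | (i : ℕ) + k < h} = h - k := by
  rw [card_filter, Fin.sum_univ_eq_sum_range (fun i => if i + k < h then 1 else 0),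
    ← card_filter, ← card_range (h - k)]
  congr 1
  ext
  simp only [mem_filter, Finset.mem_range]
  omega

lemma ProbabilityTheory.iIndepFun.measureReal_biInter_eq_false {ι Ω : Type*}
    [MeasurableSpace Ω] {μ : Measure Ω} [IsProbabilityMeasure μ] {X : ι → Ω → Bool} {p : ℝ}
    (hmeas : ∀ i, Measurable (X i)) (hber : ∀ i, μ.real {ω | X i ω = true} = p)
    (hindep : iIndepFun X μ) (s : Finset ι) :
    μ.real (⋂ i ∈ s, {ω | X i ω = false}) = (1 - p) ^ #s := by
  have hfalse : ∀ i, μ.real {ω | X i ω = false} = 1 - p := fun i => by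
    have htrue : MeasurableSet {ω | X i ω = true} := hmeas i (measurableSet_singleton true)
    rw [← hber i, ← probReal_compl_eq_one_sub htrue]
    congr 1; ext ω; simp
  rw [measureReal_def, hindep.meas_biInter (s := fun i => {ω | X i ω = false})
    fun i _ => ⟨{false}, trivial, rfl⟩, ENNReal.toReal_prod]
  simp only [← measureReal_def, hfalse, prod_const]

lemma integral_natCast_eq_sum_measureReal_lt {Ω : Type*} [MeasurableSpace Ω]
    {μ : Measure Ω} [IsFiniteMeasure μ] {f : Ω → ℕ} (hf : Measurable f) {N : ℕ}
    (hfN : ∀ ω, f ω ≤ N) :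
    ∫ ω, (f ω : ℝ) ∂μ = ∑ k ∈ range N, μ.real {ω | k < f ω} := by
  have hlevel : ∀ k, MeasurableSet {ω | k < f ω} := fun k => hf measurableSet_Ioi
  have htail : ∀ ω, (f ω : ℝ) = ∑ k ∈ range N, {ω | k < f ω}.indicator 1 ω := fun ω => by
    simp only [indicator_apply, mem_ofPred_eq, Pi.one_apply, sum_boole, Nat.cast_inj]
    rw [show {k ∈ range N | k < f ω} = range (f ω) by
      ext; simp only [mem_filter, Finset.mem_range]; have := hfN ω; omega,
      card_range]
  simp_rw [htail]
  rw [integral_finsetSum _ fun k _ => (integrable_const 1).indicator (hlevel k)]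
  simp [integral_indicator_one (hlevel _)]

lemma measureReal_lt_shCounter {Ω : Type*} [MeasurableSpace Ω] {μ : Measure Ω}
    [IsProbabilityMeasure μ] {p : ℝ} {h : ℕ} {X : Fin h → Ω → Bool}
    (hmeas : ∀ i, Measurable (X i)) (hber : ∀ i, μ.real {ω | X i ω = true} = p)
    (hindep : iIndepFun X μ) (k : ℕ) :
    μ.real {ω | k < shCounter X ω} = 1 - (1 - p) ^ (h - k) := by
  have hle : {ω | shCounter X ω ≤ k} = ⋂ i ∈ ({i | (i : ℕ) + k < h} : Finset (Fin h)),
      {ω | X i ω = false} := by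
    ext ω; simp [shCounter_le_iff]
  have hle_meas : MeasurableSet {ω | shCounter X ω ≤ k} :=
    measurable_shCounter X hmeas measurableSet_Iic
  rw [← card_filter_add_lt, ← hindep.measureReal_biInter_eq_false hmeas hber, ← hle,
    ← probReal_compl_eq_one_sub hle_meas]
  congr 1; ext; simp

lemma sum_range_pow_sub {R : Type*} [Semiring R] (x : R) (h : ℕ) :
    ∑ k ∈ range h, x ^ (h - k) = x * ∑ k ∈ range h, x ^ k := by
  rw [← sum_range_reflect, mul_sum]
  refine sum_congr rfl fun k hk => ?_
  rw [← pow_succ']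
  congr 1
  have := mem_range.1 hk
  omega

lemma sum_range_one_sub_pow_sub_add_eq (τ : ℝ) (hτ : τ ≠ 0) (h : ℕ) :
    ∑ k ∈ range h, (1 - (1 - τ) ^ (h - k)) + (1 / τ - 1) * (1 - (1 - τ) ^ h) = h := by
  have hgeom := geom_sum_mul (1 - τ) h
  rw [sum_sub_distrib, sum_const, card_range, nsmul_one, sum_range_pow_sub]
  field_simp
  linear_combination (1 - τ) * hgeom

theorem stmt_6_general {Ω : Type*} [MeasurableSpace Ω] (μ : Measure Ω) [IsProbabilityMeasure μ]
    (τ : ℝ) (hτ0 : 0 < τ) (h : ℕ)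
    (X : Fin h → Ω → Bool) (hmeas : ∀ i, Measurable (X i))
    (hber : ∀ i, μ {ω | X i ω = true} = ENNReal.ofReal τ)
    (hindep : iIndepFun X μ) :
    ∫ ω, (if shCounter X ω = 0 then (0 : ℝ)
        else (shCounter X ω : ℝ) - 1 + 1 / τ) ∂μ = (h : ℝ) := by
  have hber' : ∀ i, μ.real {ω | X i ω = true} = τ := fun i => by
    rw [measureReal_def, hber, ENNReal.toReal_ofReal hτ0.le]
  have hc := measurable_shCounter X hmeas
  have hpos : MeasurableSet {ω | 0 < shCounter X ω} := hc measurableSet_Ioi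
  have hsplit : ∀ ω, (if shCounter X ω = 0 then (0 : ℝ) else (shCounter X ω : ℝ) - 1 + 1 / τ)
      = shCounter X ω + (1 / τ - 1) * {ω | 0 < shCounter X ω}.indicator 1 ω := fun ω => by
    rcases Nat.eq_zero_or_pos (shCounter X ω) with h0 | h0
    · simp [h0]
    · rw [if_neg h0.ne', indicator_of_mem (show ω ∈ {ω | 0 < shCounter X ω} from h0),
        Pi.one_apply]
      ring
  simp_rw [hsplit]
  rw [integral_add (Integrable.of_bound (f := fun ω => (shCounter X ω : ℝ))
      (measurable_from_nat.comp hc).aestronglyMeasurable h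
      (Filter.Eventually.of_forall fun ω => by simpa using shCounter_le X ω))
      (Integrable.const_mul (f := {ω | 0 < shCounter X ω}.indicator 1)
        ((integrable_const 1).indicator hpos) _),
    integral_natCast_eq_sum_measureReal_lt hc (shCounter_le X), integral_const_mul,
    integral_indicator_one hpos]
  simp only [measureReal_lt_shCounter hmeas hber' hindep]
  exact sum_range_one_sub_pow_sub_add_eq τ hτ0.ne' h

/-- **the Sample-and-Hold estimator is unbiased.**
For `h ≥ 1` independent Bernoulli(τ) trials with `0 < τ ≤ 1` and counter `c` as in
Statement 5, the estimator `ĥ = 0` if `c = 0` and `ĥ = c - 1 + 1/τ` if `c ≥ 1`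
satisfies `E[ĥ] = h`. -/
theorem stmt_6 {Ω : Type*} [MeasurableSpace Ω] (μ : Measure Ω) [IsProbabilityMeasure μ]
    (τ : ℝ) (hτ0 : 0 < τ) (hτ1 : τ ≤ 1) (h : ℕ) (hh : 1 ≤ h)
    (X : Fin h → Ω → Bool) (hmeas : ∀ i, Measurable (X i))
    (hber : ∀ i, μ {ω | X i ω = true} = ENNReal.ofReal τ)
    (hindep : iIndepFun X μ) :
    ∫ ω, (if shCounter X ω = 0 then (0 : ℝ)
        else (shCounter X ω : ℝ) - 1 + 1 / τ) ∂μ = (h : ℝ) :=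
  stmt_6_general μ τ hτ0 h X hmeas hber hindep
end

section
/- Let ρ > 0, let w ≥ 0 and h ≥ 0 be integers with w + h ≥ 1, let U_1, ..., U_w be independent Uniform[0,1] random variables, and let E_1, ..., E_h be independent random variables (also independent of the U_i) each distributed as 1 - (1 - V)^{1/ρ} for V Uniform[0,1]. Then the seed S = min(U_1, ..., U_w, E_1, ..., E_h) satisfies, for every τ in [0,1], P(S ≥ τ) = (1-τ)^{w + ρ·h}. Consequently, the seed of a key x in the combined weighted sampling scheme has cumulative distribution function 1 - (1-τ)^{b_x}, where b_x = ρ·h_x + w_x is the combined weight of x. -/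
open MeasureTheory ProbabilityTheory Set

/-!
The seed is at least `τ` exactly when every coordinate is, so by independence `P(S ≥ τ)` is the
product of the coordinate tails: `1 - τ` for a uniform coordinate, and `(1 - τ) ^ ρ` for an `erand`
coordinate, because `1 - (1 - v) ^ (1 / ρ) ≥ τ` iff `v ≥ 1 - (1 - τ) ^ ρ`.
-/

theorem ProbabilityTheory.iIndepFun.measure_forall_mem {Ω ι β : Type*} [MeasurableSpace Ω]
    [MeasurableSpace β] [Fintype ι] {μ : Measure Ω} {X : ι → Ω → β}
    (hX : iIndepFun X μ) (hmeas : ∀ i, Measurable (X i)) {s : ι → Set β}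
    (hs : ∀ i, MeasurableSet (s i)) :
    μ {ω | ∀ i, X i ω ∈ s i} = ∏ i, μ.map (X i) (s i) := by
  rw [show {ω | ∀ i, X i ω ∈ s i} = ⋂ i, X i ⁻¹' s i by ext; simp,
    hX.meas_iInter fun i ↦ ⟨s i, hs i, rfl⟩]
  exact Finset.prod_congr rfl fun i _ ↦ (Measure.map_apply (hmeas i) (hs i)).symm

theorem volume_restrict_Icc_zero_one_Ici {τ : ℝ} (hτ : 0 ≤ τ) :
    (volume : Measure ℝ).restrict (Icc 0 1) (Ici τ) = ENNReal.ofReal (1 - τ) := by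
  have hinter : Ici τ ∩ Icc 0 1 = Icc τ 1 := by
    ext x
    simp only [mem_inter_iff, mem_Ici, mem_Icc]
    grind
  rw [Measure.restrict_apply measurableSet_Ici, hinter, Real.volume_Icc]

theorem one_sub_one_sub_rpow_inv_preimage_Ici_inter_Icc {ρ τ : ℝ} (hρ : 0 < ρ)
    (hτ : τ ≤ 1) :
    (fun v : ℝ ↦ 1 - (1 - v) ^ (1 / ρ)) ⁻¹' Ici τ ∩ Icc 0 1 =
      Ici (1 - (1 - τ) ^ ρ) ∩ Icc 0 1 := by
  ext v
  simp only [mem_inter_iff, mem_preimage, mem_Ici, mem_Icc, and_congr_left_iff, and_imp]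
  intro _ hv1
  rw [one_div, le_sub_comm, Real.rpow_inv_le_iff_of_pos (by linarith) (by linarith) hρ,
    sub_le_comm]

theorem map_one_sub_one_sub_rpow_inv_Ici {ρ τ : ℝ} (hρ : 0 < ρ) (hτ : τ ∈ Icc (0 : ℝ) 1) :
    ((volume : Measure ℝ).restrict (Icc 0 1)).map (fun v : ℝ ↦ 1 - (1 - v) ^ (1 / ρ)) (Ici τ) =
      ENNReal.ofReal ((1 - τ) ^ ρ) := by
  have hf : Measurable fun v : ℝ ↦ 1 - (1 - v) ^ (1 / ρ) := by fun_prop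
  have h1τ : 0 ≤ 1 - τ := sub_nonneg.2 hτ.2
  rw [Measure.map_apply hf measurableSet_Ici, Measure.restrict_apply (hf measurableSet_Ici),
    one_sub_one_sub_rpow_inv_preimage_Ici_inter_Icc hρ hτ.2,
    ← Measure.restrict_apply measurableSet_Ici,
    volume_restrict_Icc_zero_one_Ici, sub_sub_cancel]
  exact sub_nonneg.2 (Real.rpow_le_one h1τ (by linarith [hτ.1]) hρ.le)

theorem Real.pow_mul_rpow_pow {x ρ : ℝ} (hx : 0 ≤ x) (hρ : 0 ≤ ρ) (m n : ℕ) :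
    x ^ m * (x ^ ρ) ^ n = x ^ ((m : ℝ) + ρ * n) := by
  rw [← Real.rpow_natCast x, ← Real.rpow_natCast (x ^ ρ), ← Real.rpow_mul hx]
  by_cases hsum : (m : ℝ) + ρ * n = 0
  · have hρn : 0 ≤ ρ * n := mul_nonneg hρ n.cast_nonneg
    have hm : (m : ℝ) = 0 := by linarith [(m.cast_nonneg : (0 : ℝ) ≤ m)]
    have hρn' : ρ * n = 0 := by linarith
    simp [hm, hρn']
  · exact (Real.rpow_add' hx hsum).symm

theorem stmt_9_general {Ω : Type*} [MeasurableSpace Ω] (μ : Measure Ω)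
    (ρ : ℝ) (hρ : 0 < ρ) (w h : ℕ)
    (X : Fin w ⊕ Fin h → Ω → ℝ) (hmeas : ∀ i, Measurable (X i))
    (hU : ∀ i : Fin w,
      Measure.map (X (Sum.inl i)) μ = (volume : Measure ℝ).restrict (Icc 0 1))
    (hE : ∀ j : Fin h,
      Measure.map (X (Sum.inr j)) μ =
        Measure.map (fun v : ℝ => 1 - (1 - v) ^ (1 / ρ))
          ((volume : Measure ℝ).restrict (Icc 0 1)))
    (hindep : iIndepFun X μ) :
    ∀ τ ∈ Icc (0 : ℝ) 1,
      μ {ω | ∀ i, τ ≤ X i ω} =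
        ENNReal.ofReal ((1 - τ) ^ ((w : ℝ) + ρ * (h : ℝ))) := by
  intro τ hτ
  have h1τ : 0 ≤ 1 - τ := sub_nonneg.2 hτ.2
  change μ {ω | ∀ i, X i ω ∈ Ici τ} = _
  rw [hindep.measure_forall_mem hmeas fun _ ↦ measurableSet_Ici, Fintype.prod_sum_type]
  simp only [hU, hE, volume_restrict_Icc_zero_one_Ici hτ.1,
    map_one_sub_one_sub_rpow_inv_Ici hρ hτ, Finset.prod_const, Finset.card_univ, Fintype.card_fin]
  rw [← ENNReal.ofReal_pow h1τ, ← ENNReal.ofReal_pow (Real.rpow_nonneg h1τ ρ),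
    ← ENNReal.ofReal_mul (pow_nonneg h1τ w), Real.pow_mul_rpow_pow h1τ hρ.le]

/-- **distribution of the seed in combined weighted sampling.**
Let `ρ > 0` and `w + h ≥ 1`.  Let `X` be a family of `w + h` independent random
variables indexed by `Fin w ⊕ Fin h`: `X (inl i)` is Uniform[0,1] (the hash of the
`i`-th distinct pair of the key), and `X (inr j)` is distributed as
`1 - (1 - V) ^ (1/ρ)` for `V` Uniform[0,1] (the `erand` of the `j`-th element with
the key), expressed via pushforward measures.  Then the seed
`S = min_i X i` satisfies `P(S ≥ τ) = (1-τ) ^ (w + ρ·h)` for every `τ ∈ [0,1]`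
(the event `S ≥ τ` is written `∀ i, τ ≤ X i`); i.e., the seed of a key with classic
weight `h` and distinct weight `w` has CDF `1 - (1-τ)^(ρ·h + w)`. -/
theorem stmt_9 {Ω : Type*} [MeasurableSpace Ω] (μ : Measure Ω) [IsProbabilityMeasure μ]
    (ρ : ℝ) (hρ : 0 < ρ) (w h : ℕ) (hwh : 1 ≤ w + h)
    (X : Fin w ⊕ Fin h → Ω → ℝ) (hmeas : ∀ i, Measurable (X i))
    (hU : ∀ i : Fin w,
      Measure.map (X (Sum.inl i)) μ = (volume : Measure ℝ).restrict (Icc 0 1))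
    (hE : ∀ j : Fin h,
      Measure.map (X (Sum.inr j)) μ =
        Measure.map (fun v : ℝ => 1 - (1 - v) ^ (1 / ρ))
          ((volume : Measure ℝ).restrict (Icc 0 1)))
    (hindep : iIndepFun X μ) :
    ∀ τ ∈ Icc (0 : ℝ) 1,
      μ {ω | ∀ i, τ ≤ X i ω} =
        ENNReal.ofReal ((1 - τ) ^ ((w : ℝ) + ρ * (h : ℝ))) :=
  stmt_9_general μ ρ hρ w h X hmeas hU hE hindep
end
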